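/- Let σ > 0, λ > 0, let x0 : ℕ → ℝ be a fixed real sequence satisfying (Σ_{i=1}^P x0_i⁴)^{1/4} = o(P^{1/2}) as P → ∞, let (W_i)_{i∈ℕ} be i.i.d. centered Gaussian random variables of variance σ², and set Y_i = x0_i + W_i. Let h : ℕ → (0,∞) satisfy h(P) → 0 and 1/(P·h(P)) → 0 as P → ∞. Then Var[(1/P)·SCORE((Y_1,…,Y_P), λ, h(P))] → 0 as P → ∞. -/

import Mathlib

/-!
SCORE is `-Pσ²` plus the sum of the independent summands
`scoreTerm (Y i) = hardTerm (Y i) + 2σ² · w · k (Y i)` with `w = edofWeight`, `k = kernelPair`.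
The hard-thresholding part is bounded by `λ² + 2σ²`, `w² = λ²/(2π) · (1/σ² + 1/h²)` and
`0 ≤ k ≤ 2`. Since the Gaussian density is at most `1/√(2πσ²)`, `E k(Y i)² ≤ 4h/√(2σ²)` whatever
the mean `x0 i`, so `Var scoreTerm (Y i) ≤ C₀ + C₁/h` uniformly in `i`, and by independence the
variance of `SCORE/P` is at most `C₀/P + C₁/(P h)`, which tends to zero.
-/

open MeasureTheory ProbabilityTheory Filter Real

/-- Scalar hard thresholding at threshold `lam`. -/
noncomputable def HT (lam y : ℝ) : ℝ := if |y| < lam then 0 else y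

/-- The DOF estimator `EDOF_HT(y, λ, h)` for hard thresholding. -/
noncomputable def EDOF (σ lam h : ℝ) (P : ℕ) (y : ℕ → ℝ) : ℝ :=
  (∑ i ∈ Finset.range P, if lam < |y i| then (1 : ℝ) else 0) +
    lam * Real.sqrt (σ ^ 2 + h ^ 2) / (Real.sqrt (2 * π) * σ * h) *
      ∑ i ∈ Finset.range P,
        (Real.exp (-(y i + lam) ^ 2 / (2 * h ^ 2)) +
          Real.exp (-(y i - lam) ^ 2 / (2 * h ^ 2)))

/-- Covariance of two real random variables. -/
noncomputable def cov {Ω : Type*} [MeasurableSpace Ω] (μ : Measure Ω) (X Y : Ω → ℝ) : ℝ :=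
  ∫ ω, (X ω - ∫ x, X x ∂μ) * (Y ω - ∫ x, Y x ∂μ) ∂μ

/-- The degrees of freedom of hard thresholding:
`DOF_HT(x0, λ) = ∑ i Cov(Y i, HT(Y i, λ)) / σ²` where `Y` is the (random) observation. -/
noncomputable def DOF {Ω : Type*} [MeasurableSpace Ω] (μ : Measure Ω) (σ lam : ℝ) (P : ℕ)
    (Y : ℕ → Ω → ℝ) : ℝ :=
  ∑ i ∈ Finset.range P, cov μ (Y i) (fun ω => HT lam (Y i ω)) / σ ^ 2

/-- The Stein COnsistent Risk Estimator:
`SCORE(y, λ, h) = ‖y − HT(y,λ)‖² − P σ² + 2 σ² EDOF_HT(y, λ, h)`. -/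
noncomputable def SCORE (σ lam h : ℝ) (P : ℕ) (y : ℕ → ℝ) : ℝ :=
  (∑ i ∈ Finset.range P, (y i - HT lam (y i)) ^ 2) - P * σ ^ 2 +
    2 * σ ^ 2 * EDOF σ lam h P y

open scoped NNReal

lemma sq_sub_HT_le (lam y : ℝ) : (y - HT lam y) ^ 2 ≤ lam ^ 2 := by
  unfold HT
  split_ifs with hy
  · obtain ⟨hlo, hhi⟩ := abs_lt.mp hy
    simpa using sq_le_sq' hlo.le hhi.le
  · simp [sq_nonneg]

lemma measurable_HT (lam : ℝ) : Measurable (HT lam) :=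
  Measurable.ite (measurableSet_lt measurable_abs measurable_const) measurable_const measurable_id

lemma exp_neg_sq_div_le_one (a : ℝ) {b : ℝ} (hb : 0 ≤ b) : exp (-a ^ 2 / b) ≤ 1 :=
  exp_le_one_iff.mpr (div_nonpos_of_nonpos_of_nonneg (neg_nonpos.mpr (sq_nonneg a)) hb)

noncomputable def kernelPair (lam h y : ℝ) : ℝ :=
  exp (-(y + lam) ^ 2 / (2 * h ^ 2)) + exp (-(y - lam) ^ 2 / (2 * h ^ 2))

section kernelPair

variable (lam h : ℝ)

@[fun_prop]
lemma measurable_kernelPair : Measurable (kernelPair lam h) := by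
  unfold kernelPair
  fun_prop

lemma kernelPair_nonneg (y : ℝ) : 0 ≤ kernelPair lam h y := by
  unfold kernelPair
  positivity

lemma kernelPair_le_two (y : ℝ) : kernelPair lam h y ≤ 2 := by
  have hh : 0 ≤ 2 * h ^ 2 := by positivity
  unfold kernelPair
  linarith [exp_neg_sq_div_le_one (y + lam) hh, exp_neg_sq_div_le_one (y - lam) hh]

lemma kernelPair_sq_le (y : ℝ) :
    kernelPair lam h y ^ 2 ≤
      2 * (exp (-(h ^ 2)⁻¹ * (y + lam) ^ 2) + exp (-(h ^ 2)⁻¹ * (y - lam) ^ 2)) := by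
  have hsq (a : ℝ) : exp (-a ^ 2 / (2 * h ^ 2)) ^ 2 = exp (-(h ^ 2)⁻¹ * a ^ 2) := by
    rw [sq, ← exp_add]
    ring_nf
  rw [kernelPair, ← hsq, ← hsq]
  exact add_sq_le

lemma integral_kernelPair_sq_le_four (μ : Measure ℝ) [IsProbabilityMeasure μ] :
    ∫ y, kernelPair lam h y ^ 2 ∂μ ≤ 4 := by
  refine (integral_mono_of_nonneg (ae_of_all _ fun _ => sq_nonneg _) (integrable_const 4)
    (ae_of_all _ fun y => ?_)).trans_eq (by simp)
  have := kernelPair_le_two lam h y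
  nlinarith [kernelPair_nonneg lam h y]

end kernelPair

lemma integral_gaussianReal_le_integral_div {m : ℝ} {v : ℝ≥0} (hv : v ≠ 0) {f : ℝ → ℝ}
    (hf : 0 ≤ f) (hfi : Integrable f) :
    ∫ x, f x ∂gaussianReal m v ≤ (∫ x, f x) / √(2 * π * v) := by
  have hpdf (x : ℝ) : gaussianPDFReal m v x ≤ (√(2 * π * v))⁻¹ :=
    mul_le_of_le_one_right (by positivity) (exp_neg_sq_div_le_one _ (by positivity))
  rw [integral_gaussianReal_eq_integral_smul hv, div_eq_inv_mul, ← integral_const_mul]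
  refine integral_mono_of_nonneg (ae_of_all _ fun x => ?_) (hfi.const_mul _)
    (ae_of_all _ fun x => ?_)
  · exact smul_nonneg (gaussianPDFReal_nonneg m v x) (hf x)
  · exact mul_le_mul_of_nonneg_right (hpdf x) (hf x)

lemma integral_exp_neg_mul_sq_add_gaussianReal_le {m : ℝ} {v : ℝ≥0} (hv : v ≠ 0) {b : ℝ}
    (hb : 0 < b) (c : ℝ) :
    ∫ x, exp (-b * (x + c) ^ 2) ∂gaussianReal m v ≤ 1 / √(2 * v * b) := by
  refine (integral_gaussianReal_le_integral_div hv (fun x => (exp_pos _).le)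
    ((integrable_exp_neg_mul_sq hb).comp_add_right c)).trans_eq ?_
  have hv0 : (0 : ℝ) < v := by positivity
  rw [integral_add_right_eq_self (fun x => exp (-b * x ^ 2)) c, integral_gaussian,
    ← sqrt_div' _ (by positivity), one_div, ← sqrt_inv]
  congr 1
  field_simp

lemma integral_kernelPair_sq_gaussianReal_le {m : ℝ} {v : ℝ≥0} (hv : v ≠ 0) (lam : ℝ) {h : ℝ}
    (hh : 0 < h) : ∫ y, kernelPair lam h y ^ 2 ∂gaussianReal m v ≤ 4 * h / √(2 * v) := by
  have hb : 0 < (h ^ 2)⁻¹ := by positivity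
  have hint (c : ℝ) : Integrable (fun y => exp (-(h ^ 2)⁻¹ * (y + c) ^ 2)) (gaussianReal m v) :=
    Integrable.of_bound (by fun_prop) 1 (ae_of_all _ fun y => by
      rw [norm_of_nonneg (exp_pos _).le, exp_le_one_iff, neg_mul, neg_nonpos]
      positivity)
  have hsqrt : √(2 * v * (h ^ 2)⁻¹) = √(2 * v) / h := by
    rw [sqrt_mul (by positivity), sqrt_inv, sqrt_sq hh.le, div_eq_mul_inv]
  calc ∫ y, kernelPair lam h y ^ 2 ∂gaussianReal m v
      ≤ ∫ y, 2 * (exp (-(h ^ 2)⁻¹ * (y + lam) ^ 2) + exp (-(h ^ 2)⁻¹ * (y + -lam) ^ 2))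
          ∂gaussianReal m v :=
        integral_mono_of_nonneg (ae_of_all _ fun _ => sq_nonneg _)
          (((hint lam).add (hint (-lam))).const_mul 2)
          (ae_of_all _ fun y => by simpa only [← sub_eq_add_neg] using kernelPair_sq_le lam h y)
    _ = 2 * ((∫ y, exp (-(h ^ 2)⁻¹ * (y + lam) ^ 2) ∂gaussianReal m v) +
          ∫ y, exp (-(h ^ 2)⁻¹ * (y + -lam) ^ 2) ∂gaussianReal m v) := by
        rw [integral_const_mul, integral_add (hint lam) (hint (-lam))]
    _ ≤ 2 * (1 / √(2 * v * (h ^ 2)⁻¹) + 1 / √(2 * v * (h ^ 2)⁻¹)) := by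
        gcongr <;> exact integral_exp_neg_mul_sq_add_gaussianReal_le hv hb _
    _ = 4 * h / √(2 * v) := by
        rw [hsqrt]
        field_simp
        ring

noncomputable def edofWeight (σ lam h : ℝ) : ℝ := lam * √(σ ^ 2 + h ^ 2) / (√(2 * π) * σ * h)

lemma edofWeight_sq {σ h : ℝ} (hσ : σ ≠ 0) (hh : h ≠ 0) (lam : ℝ) :
    edofWeight σ lam h ^ 2 = lam ^ 2 / (2 * π) * ((σ ^ 2)⁻¹ + (h ^ 2)⁻¹) := by
  rw [edofWeight, div_pow, mul_pow, mul_pow, mul_pow, sq_sqrt (by positivity),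
    sq_sqrt (by positivity)]
  field_simp
  ring

noncomputable def hardTerm (σ lam y : ℝ) : ℝ :=
  (y - HT lam y) ^ 2 + 2 * σ ^ 2 * (if lam < |y| then 1 else 0)

noncomputable def scoreTerm (σ lam h y : ℝ) : ℝ :=
  hardTerm σ lam y + 2 * σ ^ 2 * edofWeight σ lam h * kernelPair lam h y

lemma SCORE_eq_sum_scoreTerm (σ lam h : ℝ) (P : ℕ) (y : ℕ → ℝ) :
    SCORE σ lam h P y = ∑ i ∈ Finset.range P, scoreTerm σ lam h (y i) - P * σ ^ 2 := by
  rw [SCORE, EDOF]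
  simp only [scoreTerm, hardTerm, edofWeight, kernelPair, Finset.sum_add_distrib, ← Finset.mul_sum]
  ring

@[fun_prop]
lemma measurable_scoreTerm (σ lam h : ℝ) : Measurable (scoreTerm σ lam h) := by
  have hjump : Measurable fun y : ℝ => if lam < |y| then (1 : ℝ) else 0 :=
    Measurable.ite (measurableSet_lt measurable_const measurable_abs) measurable_const
      measurable_const
  have := measurable_HT lam
  unfold scoreTerm hardTerm
  fun_prop

lemma abs_hardTerm_le (σ lam y : ℝ) : |hardTerm σ lam y| ≤ lam ^ 2 + 2 * σ ^ 2 := by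
  have := sq_sub_HT_le lam y
  unfold hardTerm
  split_ifs <;> rw [abs_of_nonneg (by positivity)] <;> nlinarith [sq_nonneg σ]

lemma abs_scoreTerm_le (σ lam h y : ℝ) :
    |scoreTerm σ lam h y| ≤ lam ^ 2 + 2 * σ ^ 2 + 2 * |2 * σ ^ 2 * edofWeight σ lam h| := by
  refine (abs_add_le _ _).trans (add_le_add (abs_hardTerm_le σ lam y) ?_)
  rw [abs_mul, abs_of_nonneg (kernelPair_nonneg lam h y)]
  linarith [mul_le_mul_of_nonneg_left (kernelPair_le_two lam h y)
    (abs_nonneg (2 * σ ^ 2 * edofWeight σ lam h))]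

lemma exists_integral_scoreTerm_sq_gaussianReal_le {σ : ℝ} (hσ : σ ≠ 0) (lam : ℝ) :
    ∃ C₀ C₁ : ℝ, ∀ h > 0, ∀ m : ℝ,
      ∫ y, scoreTerm σ lam h y ^ 2 ∂gaussianReal m ⟨σ ^ 2, sq_nonneg σ⟩ ≤ C₀ + C₁ * h⁻¹ := by
  set v : ℝ≥0 := ⟨σ ^ 2, sq_nonneg σ⟩
  have hv : v ≠ 0 := by
    rw [ne_eq, ← NNReal.coe_eq_zero]
    exact pow_ne_zero 2 hσ
  set A := lam ^ 2 + 2 * σ ^ 2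
  set B := lam ^ 2 / (2 * π)
  refine ⟨2 * A ^ 2 + 8 * σ ^ 4 * B * ((σ ^ 2)⁻¹ * 4), 8 * σ ^ 4 * B * (4 / √(2 * v)),
    fun h hh m => ?_⟩
  set w := edofWeight σ lam h
  set E := ∫ y, kernelPair lam h y ^ 2 ∂gaussianReal m v
  have hpointwise (y : ℝ) :
      scoreTerm σ lam h y ^ 2 ≤ 2 * A ^ 2 + 8 * σ ^ 4 * w ^ 2 * kernelPair lam h y ^ 2 := by
    have ha := pow_le_pow_left₀ (abs_nonneg _) (abs_hardTerm_le σ lam y) 2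
    rw [sq_abs] at ha
    have := add_sq_le (a := hardTerm σ lam y) (b := 2 * σ ^ 2 * w * kernelPair lam h y)
    rw [scoreTerm]
    nlinarith
  have hint : Integrable (fun y => kernelPair lam h y ^ 2) (gaussianReal m v) :=
    Integrable.of_bound (by fun_prop) 4 (ae_of_all _ fun y => by
      rw [norm_of_nonneg (sq_nonneg _)]
      nlinarith [kernelPair_nonneg lam h y, kernelPair_le_two lam h y])
  calc ∫ y, scoreTerm σ lam h y ^ 2 ∂gaussianReal m v
      ≤ ∫ y, (2 * A ^ 2 + 8 * σ ^ 4 * w ^ 2 * kernelPair lam h y ^ 2) ∂gaussianReal m v :=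
        integral_mono_of_nonneg (ae_of_all _ fun _ => sq_nonneg _)
          ((integrable_const _).add (hint.const_mul _)) (ae_of_all _ hpointwise)
    _ = 2 * A ^ 2 + 8 * σ ^ 4 * B * ((σ ^ 2)⁻¹ * E + (h ^ 2)⁻¹ * E) := by
        rw [integral_add (integrable_const _) (hint.const_mul _), integral_const,
          integral_const_mul, edofWeight_sq hσ hh.ne']
        simp only [probReal_univ, smul_eq_mul, one_mul]
        ring
    _ ≤ 2 * A ^ 2 + 8 * σ ^ 4 * B * ((σ ^ 2)⁻¹ * 4 + (h ^ 2)⁻¹ * (4 * h / √(2 * v))) := by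
        gcongr
        · exact integral_kernelPair_sq_le_four lam h _
        · exact integral_kernelPair_sq_gaussianReal_le hv lam hh
    _ = 2 * A ^ 2 + 8 * σ ^ 4 * B * ((σ ^ 2)⁻¹ * 4) + 8 * σ ^ 4 * B * (4 / √(2 * v)) * h⁻¹ := by
        field_simp
        ring

lemma variance_mean_le {Ω : Type*} [MeasurableSpace Ω] {μ : Measure Ω} [IsProbabilityMeasure μ]
    {Z : ℕ → Ω → ℝ} (hind : iIndepFun Z μ) (hZ : ∀ i, MemLp (Z i) 2 μ) {C : ℝ}
    (hC : ∀ i, Var[Z i; μ] ≤ C) (P : ℕ) :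
    Var[fun ω => 1 / (P : ℝ) * ∑ i ∈ Finset.range P, Z i ω; μ] ≤ C / P := by
  rcases P.eq_zero_or_pos with rfl | hP
  · simp only [Nat.cast_zero, div_zero, zero_mul]
    exact (variance_zero μ).le
  have hsum : Var[fun ω => ∑ i ∈ Finset.range P, Z i ω; μ] ≤ P * C := by
    simp_rw [← Finset.sum_apply]
    rw [IndepFun.variance_sum (fun i _ => hZ i)
      (fun i _ j _ hij => hind.indepFun hij)]
    simpa using Finset.sum_le_sum fun i (_ : i ∈ Finset.range P) => hC i
  rw [variance_const_mul]
  calc (1 / (P : ℝ)) ^ 2 * Var[fun ω => ∑ i ∈ Finset.range P, Z i ω; μ]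
      ≤ (1 / (P : ℝ)) ^ 2 * (P * C) := by gcongr
    _ = C / P := by field_simp

lemma map_const_add_eq_gaussianReal {Ω : Type*} [MeasurableSpace Ω] {μ : Measure Ω}
    {X : Ω → ℝ} {m : ℝ} {v : ℝ≥0} (hX : μ.map X = gaussianReal m v) (c : ℝ) :
    μ.map (fun ω => c + X ω) = gaussianReal (m + c) v := by
  have hXm : AEMeasurable X μ := .of_map_ne_zero (hX ▸ IsProbabilityMeasure.ne_zero _)
  rw [← gaussianReal_map_const_add, ← hX, AEMeasurable.map_map_of_aemeasurable (by fun_prop) hXm]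
  rfl

lemma variance_mean_comp_le {Ω : Type*} [MeasurableSpace Ω] {μ : Measure Ω}
    [IsProbabilityMeasure μ] {Y : ℕ → Ω → ℝ} (hind : iIndepFun Y μ) {ν : ℕ → Measure ℝ}
    [∀ i, IsProbabilityMeasure (ν i)] (hY : ∀ i, μ.map (Y i) = ν i) {g : ℝ → ℝ}
    (hg : Measurable g) {M : ℝ} (hgM : ∀ y, |g y| ≤ M) {C : ℝ}
    (hC : ∀ i, ∫ y, g y ^ 2 ∂ν i ≤ C) (P : ℕ) :
    Var[fun ω => 1 / (P : ℝ) * ∑ i ∈ Finset.range P, g (Y i ω); μ] ≤ C / P := by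
  have hYm (i : ℕ) : AEMeasurable (Y i) μ := .of_map_ne_zero (hY i ▸ IsProbabilityMeasure.ne_zero _)
  refine variance_mean_le (Z := fun i => g ∘ Y i) (hind.comp (fun _ => g) fun _ => hg)
    (fun i => MemLp.of_bound (hg.comp_aemeasurable (hYm i)).aestronglyMeasurable M
      (ae_of_all _ fun ω => hgM _)) (fun i => ?_) P
  rw [← variance_map hg.aemeasurable (hYm i), hY i]
  exact (variance_le_expectation_sq hg.aestronglyMeasurable).trans (by simpa using hC i)

theorem score_vanishing_variance_general
    {Ω : Type*} [MeasurableSpace Ω] (μpr : Measure Ω) [IsProbabilityMeasure μpr]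
    (σ lam : ℝ) (hσ : 0 < σ)
    (x0 : ℕ → ℝ)
    (W : ℕ → Ω → ℝ)
    (hindep : iIndepFun W μpr)
    (hdist : ∀ i, Measure.map (W i) μpr = gaussianReal 0 ⟨σ ^ 2, sq_nonneg σ⟩)
    (h : ℕ → ℝ) (hpos : ∀ P, 0 < h P)
    (hPh : Tendsto (fun P : ℕ => 1 / ((P : ℝ) * h P)) atTop (nhds 0)) :
    Tendsto
      (fun P : ℕ =>
        variance (fun ω => (1 / (P : ℝ)) * SCORE σ lam (h P) P (fun i => x0 i + W i ω)) μpr)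
      atTop (nhds 0) := by
  obtain ⟨C₀, C₁, hC⟩ := exists_integral_scoreTerm_sq_gaussianReal_le hσ.ne' lam
  -- instance search does not see through the anonymous constructor to find
  -- `IsProbabilityMeasure (gaussianReal m ⟨σ ^ 2, _⟩)`, so the variance gets a name
  set v : ℝ≥0 := ⟨σ ^ 2, sq_nonneg σ⟩
  have hlaw (i : ℕ) : μpr.map (fun ω => x0 i + W i ω) = gaussianReal (x0 i) v := by
    simpa using map_const_add_eq_gaussianReal (hdist i) (x0 i)
  have hY (i : ℕ) : AEMeasurable (fun ω => x0 i + W i ω) μpr :=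
    .of_map_ne_zero (hlaw i ▸ IsProbabilityMeasure.ne_zero _)
  have hind : iIndepFun (fun i ω => x0 i + W i ω) μpr :=
    hindep.comp (fun i w => x0 i + w) fun i => by fun_prop
  have hbound (P : ℕ) :
      variance (fun ω => (1 / (P : ℝ)) * SCORE σ lam (h P) P (fun i => x0 i + W i ω)) μpr ≤
        C₀ * (1 / P) + C₁ * (1 / (P * h P)) := by
    simp_rw [SCORE_eq_sum_scoreTerm, mul_sub]
    have hmean_meas : AEMeasurable
        (fun ω => 1 / (P : ℝ) * ∑ i ∈ Finset.range P, scoreTerm σ lam (h P) (x0 i + W i ω)) μpr :=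
      by fun_prop
    rw [variance_sub_const hmean_meas.aestronglyMeasurable]
    calc _ ≤ (C₀ + C₁ * (h P)⁻¹) / P :=
          variance_mean_comp_le hind hlaw (measurable_scoreTerm _ _ _) (abs_scoreTerm_le _ _ _)
            (fun i => hC (h P) (hpos P) (x0 i)) P
      _ = C₀ * (1 / P) + C₁ * (1 / (P * h P)) := by ring
  refine squeeze_zero (fun P => variance_nonneg _ _) hbound ?_
  simpa using (tendsto_one_div_atTop_nhds_zero_nat.const_mul C₀).add (hPh.const_mul C₁)

/-- under the ℓ⁴ growth condition, the variance of `(1/P)·SCORE(Y, λ, h(P))`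
vanishes as `P → ∞`. -/
theorem score_vanishing_variance
    {Ω : Type*} [MeasurableSpace Ω] (μpr : Measure Ω) [IsProbabilityMeasure μpr]
    (σ lam : ℝ) (hσ : 0 < σ) (hlam : 0 < lam)
    (x0 : ℕ → ℝ)
    (hx0 : (fun P : ℕ => (∑ i ∈ Finset.range P, (x0 i) ^ 4) ^ ((1 : ℝ) / 4))
            =o[atTop] (fun P : ℕ => (P : ℝ) ^ ((1 : ℝ) / 2)))
    (W : ℕ → Ω → ℝ)
    (hmeas : ∀ i, Measurable (W i))
    (hindep : iIndepFun W μpr)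
    (hdist : ∀ i, Measure.map (W i) μpr = gaussianReal 0 ⟨σ ^ 2, sq_nonneg σ⟩)
    (h : ℕ → ℝ) (hpos : ∀ P, 0 < h P)
    (hh0 : Tendsto h atTop (nhds 0))
    (hPh : Tendsto (fun P : ℕ => 1 / ((P : ℝ) * h P)) atTop (nhds 0)) :
    Tendsto
      (fun P : ℕ =>
        variance (fun ω => (1 / (P : ℝ)) * SCORE σ lam (h P) P (fun i => x0 i + W i ω)) μpr)
      atTop (nhds 0) :=
  score_vanishing_variance_general μpr σ lam hσ x0 W hindep hdist h hpos hPh
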